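/- arXiv:1211.2456 — 3 statements merged into one kernel-verified Lean document; each statement's English description precedes it below -/
import Mathlib

section
/- Let M be a matroid on a finite ground set E with rank function r, and let ℓ : E → ℕ and W : E → ℕ be two functions. Then the following three conditions are equivalent: (1) for every list assignment L on E of size ℓ, the matroid M is W-colorable from L; (2) M is W-colorable from the lists 𝐋(e) = {1, 2, …, ℓ(e)}; (3) for every subset A ⊆ E one has Σ_{i≥1} r({e ∈ A : ℓ(e) ≥ i}) ≥ Σ_{e∈A} W(e). -/
/-- The rank of a set `A` in a matroid `M`: the maximum cardinality of an
independent subset of `A`. -/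
noncomputable def matroidRank {α : Type*} (M : Matroid α) (A : Set α) : ℕ :=
  sSup {n | ∃ I, M.Indep I ∧ I ⊆ A ∧ I.ncard = n}

/-- `M` is `W`-colorable from the lists `L`: every element `e` of the ground set can be
given a set `L'(e) ⊆ L(e)` of `W(e)` colors so that, for each color `i`, the set of
elements having color `i` is independent in `M`. -/
def Matroid.WColorable {α : Type*} (M : Matroid α) (W : α → ℕ) (L : α → Finset ℕ) : Prop :=
  ∃ L' : α → Finset ℕ, (∀ e ∈ M.E, L' e ⊆ L e ∧ (L' e).card = W e) ∧
    ∀ i : ℕ, M.Indep {e ∈ M.E | i ∈ L' e}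

/-!
(1) ⇒ (2) is a special case, and (2) ⇒ (3) is double counting: the elements of `A` colored `i`
form an independent subset of `{e ∈ A | i ≤ ℓ e}`.

For (3) ⇒ (1), give color `i` the matroid `M ↾ A_i` with `A_i = {e | i ∈ L e}`. By the matroid
partition theorem with multiplicities, a coloring exists once `∑_{e ∈ X} W e ≤ ∑_i r(X ∩ A_i)` for
every `X`; it is proved by coloring one element at a time, contracting it in a color that keeps the
rank condition, and such a color exists because tight sets are closed under union. Finally, the
sets `X ∩ A_i` cover each `e ∈ X` exactly `ℓ e` times, so uncrossing them by submodularity bounds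
`∑_i r(X ∩ A_i)` below by `∑_{j ≥ 1} r({e ∈ X | j ≤ ℓ e})`, which is condition (3).
-/

open Finset

section Rank

open Matroid

variable {α : Type*} {M : Matroid α} {I J X Y : Set α} {e : α}

lemma matroidRank_le_of_forall_indep {n : ℕ} (h : ∀ I, M.Indep I → I ⊆ X → I.ncard ≤ n) :
    matroidRank M X ≤ n :=
  csSup_le ⟨0, ∅, M.empty_indep, X.empty_subset, Set.ncard_empty α⟩
    fun _ ⟨I, hI, hIX, hn⟩ => hn ▸ h I hI hIX

@[simp] lemma matroidRank_empty (M : Matroid α) : matroidRank M ∅ = 0 :=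
  Nat.eq_zero_of_le_zero <| matroidRank_le_of_forall_indep fun I _ hI => by
    simp [Set.subset_empty_iff.1 hI]

variable [M.RankFinite]

lemma Matroid.IsBasis'.ncard_eq_matroidRank (hJ : M.IsBasis' J X) :
    J.ncard = matroidRank M X := by
  have hle : ∀ I, M.Indep I → I ⊆ X → I.ncard ≤ J.ncard := fun I hI hIX => by
    have h := hI.encard_le_eRk_of_subset hIX
    rwa [← hJ.encard_eq_eRk, ← hI.finite.cast_ncard_eq, ← hJ.indep.finite.cast_ncard_eq,
      Nat.cast_le] at h
  refine le_antisymm (le_csSup ⟨J.ncard, ?_⟩ ⟨J, hJ.indep, hJ.subset, rfl⟩)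
    (matroidRank_le_of_forall_indep hle)
  rintro _ ⟨I, hI, hIX, rfl⟩
  exact hle I hI hIX

lemma natCast_matroidRank (M : Matroid α) [M.RankFinite] (X : Set α) :
    (matroidRank M X : ℕ∞) = M.eRk X := by
  obtain ⟨J, hJ⟩ := M.exists_isBasis' X
  rw [← hJ.ncard_eq_matroidRank, hJ.indep.finite.cast_ncard_eq, hJ.encard_eq_eRk]

lemma matroidRank_mono (hXY : X ⊆ Y) : matroidRank M X ≤ matroidRank M Y := by
  have h := M.eRk_mono hXY
  rwa [← natCast_matroidRank, ← natCast_matroidRank, Nat.cast_le] at h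

lemma Matroid.Indep.ncard_le_matroidRank (hI : M.Indep I) (hIX : I ⊆ X) :
    I.ncard ≤ matroidRank M X := by
  have h := hI.encard_le_eRk_of_subset hIX
  rwa [← hI.finite.cast_ncard_eq, ← natCast_matroidRank, Nat.cast_le] at h

lemma matroidRank_inter_add_matroidRank_union_le (M : Matroid α) [M.RankFinite] (X Y : Set α) :
    matroidRank M (X ∩ Y) + matroidRank M (X ∪ Y) ≤ matroidRank M X + matroidRank M Y := by
  have h := M.eRk_inter_add_eRk_union_le X Y
  simp only [← natCast_matroidRank] at h
  exact_mod_cast h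

lemma matroidRank_restrict (R X : Set α) : matroidRank (M ↾ R) X = matroidRank M (X ∩ R) := by
  rw [← Nat.cast_inj (R := ℕ∞), natCast_matroidRank, natCast_matroidRank, M.restrict_eRk_eq']

lemma matroidRank_insert_le_of_subset (hXY : X ⊆ Y)
    (h : matroidRank M (insert e X) ≤ matroidRank M X) :
    matroidRank M (insert e Y) ≤ matroidRank M Y := by
  have hsub := matroidRank_inter_add_matroidRank_union_le M (insert e X) Y
  rw [Set.insert_union, Set.union_eq_right.2 hXY] at hsub
  have hX := matroidRank_mono (M := M) (Set.subset_inter (Set.subset_insert e X) hXY)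
  omega

lemma Matroid.isNonloop_of_matroidRank_singleton_pos (h : 0 < matroidRank M {e}) :
    M.IsNonloop e := by
  have hle := M.eRk_singleton_le e
  rw [← natCast_matroidRank] at hle
  rw [← eRk_singleton_eq_one_iff, ← natCast_matroidRank]
  norm_cast at hle ⊢
  omega

lemma Matroid.IsNonloop.matroidRank_contract_add_one (he : M.IsNonloop e) (X : Set α) :
    matroidRank (M ／ {e}) X + 1 = matroidRank M (insert e X) := by
  obtain ⟨J, hJ, heJ⟩ := he.indep.subset_isBasis'_of_subset
    (Set.singleton_subset_iff.2 (Set.mem_insert e X))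
  have hJe := hJ.contract_isBasis'_sdiff_of_subset heJ
  have hins : matroidRank (M ／ {e}) (insert e X) = matroidRank (M ／ {e}) X := by
    rw [← Nat.cast_inj (R := ℕ∞), natCast_matroidRank, natCast_matroidRank,
      Matroid.eRk_insert_of_notMem_ground X (by simp)]
  rw [← hins, ← hJe.ncard_eq_matroidRank, ← hJ.ncard_eq_matroidRank,
    Set.ncard_sdiff_singleton_add_one (heJ rfl) hJ.indep.finite]

end Rank

theorem sum_range_superlevel_le_sum_of_submodular {ι α : Type*} [DecidableEq ι] (f : Set α → ℕ)
    (hf₀ : f ∅ = 0) (hf : ∀ X Y, f (X ∩ Y) + f (X ∪ Y) ≤ f X + f Y) (S : Finset ι)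
    (C : ι → Set α) [∀ i a, Decidable (a ∈ C i)] :
    ∑ j ∈ range #S, f {a | j < #{i ∈ S | a ∈ C i}} ≤ ∑ i ∈ S, f (C i) := by
  induction S using Finset.induction_on with
  | empty => simp
  | @insert b S hb ih =>
    set lev : ℕ → Set α := fun j => {a | j ≤ #{i ∈ S | a ∈ C i}} with hlev
    -- Adding `C b` raises the multiplicity exactly on `C b`, so each new level set is an
    -- old one uncrossed with `C b`; submodularity then telescopes.
    have hnew : ∀ j, {a | j < #{i ∈ insert b S | a ∈ C i}} = lev (j + 1) ∪ (lev j ∩ C b) := by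
      intro j
      ext a
      simp only [hlev, Set.mem_ofPred_eq, Set.mem_union, Set.mem_inter_iff, filter_insert]
      by_cases ha : a ∈ C b
      · simp only [ha, if_true, and_true]
        rw [card_insert_of_notMem (by simp [hb])]
        omega
      · simp only [ha, if_false, and_false, or_false]
        omega
    have hstep : ∀ j, f {a | j < #{i ∈ insert b S | a ∈ C i}} + f (lev (j + 1) ∩ C b)
        ≤ f (lev (j + 1)) + f (lev j ∩ C b) := by
      intro j
      have h := hf (lev (j + 1)) (lev j ∩ C b)
      have hmono : lev (j + 1) ⊆ lev j := fun a ha => Nat.le_of_succ_le ha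
      rwa [← Set.inter_assoc, Set.inter_eq_left.2 hmono, ← hnew, add_comm] at h
    have htop : lev (#S + 1) = ∅ := Set.eq_empty_of_forall_notMem fun a ha =>
      (Nat.lt_succ_of_le (card_filter_le S _)).not_ge ha
    have hbot : lev 0 ∩ C b = C b := Set.inter_eq_right.2 fun a _ => Nat.zero_le _
    have hsum := Finset.sum_le_sum fun j (_ : j ∈ range (#S + 1)) => hstep j
    rw [sum_add_distrib, sum_add_distrib, sum_range_succ (fun j => f (lev (j + 1))),
      sum_range_succ (fun j => f (lev (j + 1) ∩ C b)), sum_range_succ' (fun j => f (lev j ∩ C b)),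
      htop, hf₀, hbot] at hsum
    rw [card_insert_of_notMem hb, sum_insert hb]
    simp only [hlev, Nat.lt_iff_add_one_le] at hsum ih ⊢
    omega

section Partition

open Matroid

variable {ι α : Type*} {Ms : ι → Matroid α} {S : Finset ι} {E₀ X Y : Finset α} {W : α → ℕ}

/-- Under the rank condition `∑ e ∈ X, W e ≤ ∑ i ∈ S, matroidRank (Ms i) X`, this says that the
condition is an equality at `X`. -/
def IsTight (Ms : ι → Matroid α) (S : Finset ι) (W : α → ℕ) (X : Finset α) : Prop :=
  ∑ i ∈ S, matroidRank (Ms i) X ≤ ∑ e ∈ X, W e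

lemma isTight_empty : IsTight Ms S W ∅ := by
  simp [IsTight]

lemma IsTight.union [DecidableEq α] [∀ i, (Ms i).RankFinite] (hX : IsTight Ms S W X)
    (hY : IsTight Ms S W Y) (hXY : ∑ e ∈ X ∩ Y, W e ≤ ∑ i ∈ S, matroidRank (Ms i) ↑(X ∩ Y)) :
    IsTight Ms S W (X ∪ Y) := by
  have hsub : ∑ i ∈ S, (matroidRank (Ms i) ↑(X ∩ Y) + matroidRank (Ms i) ↑(X ∪ Y))
      ≤ ∑ i ∈ S, (matroidRank (Ms i) X + matroidRank (Ms i) Y) :=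
    sum_le_sum fun i _ => by
      simpa only [coe_inter, coe_union] using matroidRank_inter_add_matroidRank_union_le (Ms i) X Y
  have hW := sum_union_inter (s₁ := X) (s₂ := Y) (f := W)
  simp only [IsTight, sum_add_distrib] at hX hY hsub ⊢
  omega

lemma exists_mem_forall_isTight_matroidRank_lt [∀ i, (Ms i).RankFinite] {e : α}
    (hW : ∀ X ⊆ E₀, ∑ e ∈ X, W e ≤ ∑ i ∈ S, matroidRank (Ms i) X) (he : e ∈ E₀) (hWe : W e ≠ 0) :
    ∃ i ∈ S, ∀ X ⊆ E₀, e ∉ X → IsTight Ms S W X →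
      matroidRank (Ms i) X < matroidRank (Ms i) (insert e X) := by
  classical
  by_contra! h
  choose! X hXE heX hXt hXe using h
  -- The union of the tight sets that block every color is tight, yet adding `e` to it
  -- raises no rank while raising the demand.
  have hT : S.sup X ⊆ E₀ ∧ IsTight Ms S W (S.sup X) :=
    sup_induction (p := fun T => T ⊆ E₀ ∧ IsTight Ms S W T) ⟨empty_subset _, isTight_empty⟩
      (fun _ h₁ _ h₂ => ⟨union_subset h₁.1 h₂.1,
        h₁.2.union h₂.2 (hW _ (inter_subset_left.trans h₁.1))⟩)
      fun i hi => ⟨hXE i hi, hXt i hi⟩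
  have heT : e ∉ S.sup X := by
    simpa only [mem_sup, not_exists, not_and] using heX
  have hrank : ∀ i ∈ S, matroidRank (Ms i) ↑(insert e (S.sup X)) ≤ matroidRank (Ms i) ↑(S.sup X) :=
    fun i hi => by
      rw [coe_insert]
      exact matroidRank_insert_le_of_subset (coe_subset.2 (le_sup hi)) (by simpa using hXe i hi)
  have hdemand := hW _ (insert_subset he hT.1)
  rw [sum_insert heT] at hdemand
  have hT' : IsTight Ms S W (S.sup X) := hT.2
  unfold IsTight at hT'
  have := sum_le_sum hrank
  omega

lemma sum_le_sum_matroidRank_contract [DecidableEq ι] [DecidableEq α] [∀ i, (Ms i).RankFinite]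
    {e : α} {i₀ : ι} (hW : ∀ X ⊆ E₀, ∑ x ∈ X, W x ≤ ∑ i ∈ S, matroidRank (Ms i) X)
    (hi₀ : i₀ ∈ S) (he : (Ms i₀).IsNonloop e) (hWe : W e ≠ 0)
    (hgood : ∀ X ⊆ E₀, e ∉ X → IsTight Ms S W X →
      matroidRank (Ms i₀) X < matroidRank (Ms i₀) (insert e X)) :
    ∀ X ⊆ E₀, ∑ x ∈ X, Function.update W e (W e - 1) x ≤
      ∑ i ∈ S, matroidRank (Function.update Ms i₀ (Ms i₀ ／ {e}) i) X := by
  intro X hX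
  have hsplit : ∀ Ns : ι → Matroid α,
      ∑ i ∈ S, matroidRank (Ns i) X = matroidRank (Ns i₀) X + ∑ i ∈ S \ {i₀}, matroidRank (Ns i) X :=
    fun Ns => sum_eq_add_sum_sdiff_singleton_of_mem hi₀ _
  have hcontract := he.matroidRank_contract_add_one X
  rw [hsplit, Function.update_self]
  have hX' := hW X hX
  rw [hsplit] at hX'
  have hrest : ∑ i ∈ S \ {i₀}, matroidRank (Function.update Ms i₀ (Ms i₀ ／ {e}) i) X
      = ∑ i ∈ S \ {i₀}, matroidRank (Ms i) X :=
    sum_congr rfl fun i hi => by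
      rw [Function.update_of_ne (by simpa using (mem_sdiff.1 hi).2)]
  rw [hrest]
  by_cases heX : e ∈ X
  · rw [sum_update_of_mem heX]
    rw [sum_eq_add_sum_sdiff_singleton_of_mem heX] at hX'
    rw [Set.insert_eq_of_mem (by simpa using heX)] at hcontract
    omega
  · rw [sum_update_of_notMem heX]
    have hmono := matroidRank_mono (M := Ms i₀) (Set.subset_insert e (X : Set α))
    by_cases ht : IsTight Ms S W X
    · have := hgood X hX heX ht
      rw [IsTight, hsplit] at ht
      omega
    · rw [IsTight, hsplit] at ht
      omega

end Partition

open Matroid in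
theorem exists_partition_of_sum_le_sum_matroidRank {ι α : Type*} (Ms : ι → Matroid α)
    [∀ i, (Ms i).RankFinite] (S : Finset ι) (E₀ : Finset α) (W : α → ℕ)
    (hW : ∀ X ⊆ E₀, ∑ e ∈ X, W e ≤ ∑ i ∈ S, matroidRank (Ms i) X) :
    ∃ c : α → Finset ι, (∀ e ∈ E₀, c e ⊆ S ∧ (c e).card = W e) ∧
      ∀ i, (Ms i).Indep {e | e ∈ E₀ ∧ i ∈ c e} := by
  classical
  obtain ⟨n, hn⟩ : ∃ n, ∑ e ∈ E₀, W e = n := ⟨_, rfl⟩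
  induction n generalizing W Ms with
  | zero =>
    refine ⟨fun _ => ∅, fun e he => ⟨empty_subset S, ?_⟩, fun i => by simp⟩
    exact (sum_eq_zero_iff.1 hn e he).symm
  | succ n ih =>
    obtain ⟨e, he, hWe⟩ := exists_ne_zero_of_sum_ne_zero (hn.trans_ne n.succ_ne_zero)
    obtain ⟨i₀, hi₀, hgood⟩ := exists_mem_forall_isTight_matroidRank_lt hW he hWe
    have hnonloop : (Ms i₀).IsNonloop e := isNonloop_of_matroidRank_singleton_pos <| by
      simpa using hgood ∅ (empty_subset _) (notMem_empty e) isTight_empty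
    set Ms' := Function.update Ms i₀ (Ms i₀ ／ {e}) with hMs'
    have : ∀ i, (Ms' i).RankFinite := fun i => by
      unfold Ms'; rw [Function.update_apply]; split_ifs <;> infer_instance
    obtain ⟨c, hc, hind⟩ := ih Ms' (Function.update W e (W e - 1))
      (sum_le_sum_matroidRank_contract hW hi₀ hnonloop hWe hgood)
      (by
        rw [sum_eq_add_sum_sdiff_singleton_of_mem he] at hn
        rw [sum_update_of_mem he]
        omega)
    have hi₀c : i₀ ∉ c e := fun h => by
      have := (hind i₀).subset_ground ⟨he, h⟩
      simp [Ms'] at this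
    refine ⟨Function.update c e (insert i₀ (c e)), fun x hx => ?_, fun i => ?_⟩
    · rcases eq_or_ne x e with rfl | hxe
      · simp only [Function.update_self]
        refine ⟨insert_subset hi₀ (hc x hx).1, ?_⟩
        rw [card_insert_of_notMem hi₀c, (hc x hx).2, Function.update_self]
        omega
      · simpa [Function.update_of_ne hxe] using hc x hx
    · rcases eq_or_ne i i₀ with rfl | hii₀
      · have hclass : {x | x ∈ E₀ ∧ i ∈ Function.update c e (insert i (c e)) x}
            = insert e {x | x ∈ E₀ ∧ i ∈ c x} := by
          ext x
          rcases eq_or_ne x e with rfl | hxe <;> simp [Function.update_apply, *]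
        have := hind i
        rw [hMs', Function.update_self, hnonloop.contractElem_indep_iff] at this
        exact hclass ▸ this.2
      · have hclass : {x | x ∈ E₀ ∧ i ∈ Function.update c e (insert i₀ (c e)) x}
            = {x | x ∈ E₀ ∧ i ∈ c x} := by
          ext x
          rcases eq_or_ne x e with rfl | hxe <;> simp [Function.update_apply, *]
        simpa [hclass, Ms', Function.update_of_ne hii₀] using hind i

section Coloring

open Matroid

variable {α : Type*} {M : Matroid α} {ℓ W : α → ℕ}

lemma finsum_Ici_one_matroidRank_eq_sum_Icc (M : Matroid α) {A : Set α} {N : ℕ}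
    (hN : ∀ e ∈ A, ℓ e ≤ N) :
    ∑ᶠ i ∈ Set.Ici 1, matroidRank M {e ∈ A | i ≤ ℓ e} =
      ∑ i ∈ Icc 1 N, matroidRank M {e ∈ A | i ≤ ℓ e} := by
  refine finsum_mem_eq_sum_of_inter_support_eq _ (Set.ext fun i => ?_)
  simp only [Set.mem_inter_iff, Set.mem_Ici, Function.mem_support, coe_Icc, Set.mem_Icc]
  refine ⟨fun ⟨h1, h⟩ => ⟨⟨h1, not_lt.1 fun hNi => h ?_⟩, h⟩, fun ⟨⟨h1, _⟩, h⟩ => ⟨h1, h⟩⟩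
  convert matroidRank_empty M
  exact Set.eq_empty_of_forall_notMem fun e ⟨he, hi⟩ => (hNi.trans_le hi).not_ge (hN e he)

lemma Matroid.WColorable.finsum_le_finsum_matroidRank [M.Finite]
    (h : M.WColorable W fun e => Icc 1 (ℓ e)) (A : Set α) (hA : A ⊆ M.E) :
    ∑ᶠ e ∈ A, W e ≤ ∑ᶠ i ∈ Set.Ici 1, matroidRank M {e ∈ A | i ≤ ℓ e} := by
  classical
  obtain ⟨L', hL', hind⟩ := h
  have hAfin := M.ground_finite.subset hA
  have hA' : ∀ {e}, e ∈ hAfin.toFinset ↔ e ∈ A := hAfin.mem_toFinset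
  set N := hAfin.toFinset.sup ℓ
  have hN : ∀ e ∈ A, ℓ e ≤ N := fun e he => le_sup (hA'.2 he)
  have hL'N : ∀ e ∈ A, L' e ⊆ Icc 1 N := fun e he =>
    (hL' e (hA he)).1.trans (Icc_subset_Icc_right (hN e he))
  rw [finsum_mem_eq_finite_toFinset_sum _ hAfin, finsum_Ici_one_matroidRank_eq_sum_Icc M hN]
  calc ∑ e ∈ hAfin.toFinset, W e
      = ∑ e ∈ hAfin.toFinset, #{i ∈ Icc 1 N | i ∈ L' e} := sum_congr rfl fun e he => by
        rw [filter_mem_eq_inter, inter_eq_right.2 (hL'N e (hA'.1 he)), (hL' e (hA (hA'.1 he))).2]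
    _ = ∑ i ∈ Icc 1 N, #{e ∈ hAfin.toFinset | i ∈ L' e} :=
        sum_card_bipartiteAbove_eq_sum_card_bipartiteBelow _
    _ ≤ ∑ i ∈ Icc 1 N, matroidRank M {e ∈ A | i ≤ ℓ e} := sum_le_sum fun i _ => by
        rw [← Set.ncard_coe_finset]
        refine Indep.ncard_le_matroidRank ((hind i).subset fun e he => ?_) fun e he => ?_
        · simp only [coe_filter, hA', Set.mem_ofPred_eq] at he
          exact ⟨hA he.1, he.2⟩
        · simp only [coe_filter, hA', Set.mem_ofPred_eq] at he
          exact ⟨he.1, (mem_Icc.1 ((hL' e (hA he.1)).1 he.2)).2⟩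

lemma sum_le_sum_matroidRank_restrict [M.RankFinite]
    (h : ∀ A ⊆ M.E, ∑ᶠ e ∈ A, W e ≤ ∑ᶠ i ∈ Set.Ici 1, matroidRank M {e ∈ A | i ≤ ℓ e})
    {L : α → Finset ℕ} {S : Finset ℕ} (hL : ∀ e ∈ M.E, #(L e) = ℓ e)
    (hLS : ∀ e ∈ M.E, L e ⊆ S) (X : Finset α) (hXE : (X : Set α) ⊆ M.E) :
    ∑ e ∈ X, W e ≤ ∑ i ∈ S, matroidRank (M ↾ {e | i ∈ L e}) X := by
  classical
  have hN : ∀ e ∈ (X : Set α), ℓ e ≤ #S := fun e he =>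
    hL e (hXE he) ▸ card_le_card (hLS e (hXE he))
  calc ∑ e ∈ X, W e = ∑ᶠ e ∈ (X : Set α), W e := (finsum_mem_coe_finset _ _).symm
    _ ≤ ∑ i ∈ Icc 1 #S, matroidRank M {e ∈ (X : Set α) | i ≤ ℓ e} :=
        finsum_Ici_one_matroidRank_eq_sum_Icc M hN ▸ h _ hXE
    _ = ∑ j ∈ range #S, matroidRank M {e | j < #{i ∈ S | e ∈ ↑X ∩ {x | i ∈ L x}}} := by
        rw [range_eq_Ico, ← Ico_add_one_right_eq_Icc, ← sum_Ico_add' _ 0 #S 1]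
        refine sum_congr rfl fun j _ => congrArg _ (Set.ext fun e => ?_)
        by_cases he : e ∈ X
        · have hcount : #{i ∈ S | e ∈ ↑X ∩ {x | i ∈ L x}} = ℓ e := by
            simp only [Set.mem_inter_iff, mem_coe, he, true_and, Set.mem_ofPred_eq]
            rw [filter_mem_eq_inter, inter_eq_right.2 (hLS e (hXE he)), hL e (hXE he)]
          rw [Set.mem_ofPred_eq, Set.mem_ofPred_eq, hcount, mem_coe]
          exact ⟨fun h => h.2, fun h => ⟨he, h⟩⟩
        · have hcount : #{i ∈ S | e ∈ ↑X ∩ {x | i ∈ L x}} = 0 := by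
            simp only [Set.mem_inter_iff, mem_coe, he, false_and, filter_false, card_empty]
          rw [Set.mem_ofPred_eq, Set.mem_ofPred_eq, hcount, mem_coe]
          exact ⟨fun h => absurd h.1 he, fun h => absurd h (Nat.not_lt_zero j)⟩
    _ ≤ ∑ i ∈ S, matroidRank M (↑X ∩ {x | i ∈ L x}) :=
        sum_range_superlevel_le_sum_of_submodular _ (matroidRank_empty M)
          (matroidRank_inter_add_matroidRank_union_le M) S _
    _ = ∑ i ∈ S, matroidRank (M ↾ {e | i ∈ L e}) X := by simp only [matroidRank_restrict]

theorem Matroid.wColorable_of_forall_finsum_le [M.Finite]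
    (h : ∀ A ⊆ M.E, ∑ᶠ e ∈ A, W e ≤ ∑ᶠ i ∈ Set.Ici 1, matroidRank M {e ∈ A | i ≤ ℓ e})
    (L : α → Finset ℕ) (hL : ∀ e ∈ M.E, #(L e) = ℓ e) : M.WColorable W L := by
  have hE₀ : ∀ {e}, e ∈ M.ground_finite.toFinset ↔ e ∈ M.E := M.ground_finite.mem_toFinset
  obtain ⟨c, hc, hind⟩ := exists_partition_of_sum_le_sum_matroidRank
    (fun i => M ↾ {e | i ∈ L e}) (M.ground_finite.toFinset.biUnion L) M.ground_finite.toFinset W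
    fun X hX => sum_le_sum_matroidRank_restrict h hL
      (fun e he => subset_biUnion_of_mem L (hE₀.2 he)) X fun e he => hE₀.1 (hX he)
  refine ⟨c, fun e he => ⟨fun i hi => ?_, (hc e (hE₀.2 he)).2⟩, fun i => ?_⟩
  · exact (hind i).subset_ground ⟨hE₀.2 he, hi⟩
  · simpa only [hE₀] using (restrict_indep_iff.1 (hind i)).1

end Coloring

/-- **Theorem 3 (generalization of Seymour's theorem).** For a matroid `M` on a finite
ground set and functions `ℓ, W : E → ℕ`, the following are equivalent:
(1) `M` is `W`-colorable from every list assignment of size `ℓ`;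
(2) `M` is `W`-colorable from the lists `𝐋(e) = {1, …, ℓ(e)}`;
(3) for every `A ⊆ E`, `Σ_{i ≥ 1} r({e ∈ A : ℓ(e) ≥ i}) ≥ Σ_{e ∈ A} W(e)`. -/
theorem wColorable_lists_tfae {α : Type*} (M : Matroid α) (hE : M.E.Finite) (ℓ W : α → ℕ) :
    ((∀ L : α → Finset ℕ, (∀ e ∈ M.E, (L e).card = ℓ e) → M.WColorable W L) ↔
        M.WColorable W (fun e => Finset.Icc 1 (ℓ e))) ∧
      (M.WColorable W (fun e => Finset.Icc 1 (ℓ e)) ↔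
        ∀ A ⊆ M.E, ∑ᶠ e ∈ A, W e ≤
          ∑ᶠ i ∈ Set.Ici (1 : ℕ), matroidRank M {e ∈ A | i ≤ ℓ e}) := by
  have : M.Finite := ⟨hE⟩
  have h12 : (∀ L : α → Finset ℕ, (∀ e ∈ M.E, (L e).card = ℓ e) → M.WColorable W L) →
      M.WColorable W (fun e => Finset.Icc 1 (ℓ e)) := fun h => h _ fun e _ => by simp
  exact ⟨⟨h12, fun h2 => M.wColorable_of_forall_finsum_le h2.finsum_le_finsum_matroidRank⟩,
    ⟨fun h2 => h2.finsum_le_finsum_matroidRank,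
      fun h3 => h12 (M.wColorable_of_forall_finsum_le h3)⟩⟩
end

section
/- Let I₁, …, I_k be a partition of the finite ground set E of a matroid M into independent sets, and define ℓ : E → ℕ by ℓ(e) = i whenever e ∈ I_i. Then for every list assignment L on E with |L(e)| = ℓ(e) for all e ∈ E, there exists a proper coloring of M from the lists L. -/
/-!
Colour classes must be independent, so this is a list version of Rado's theorem on independent
transversals: `E` can be coloured from lists `L` as soon as every `K ⊆ E` satisfies
`|K| ≤ ∑_γ r {e ∈ K | γ ∈ L e}`. Under this condition one can shrink the lists to singletons:
if `e` has two colours `x ≠ y`, deleting `x` or deleting `y` from its list keeps the condition,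
because violating sets `K₁`, `K₂` for the two deletions both contain `e`, and submodularity of
`r` would then make `K₁ ∪ K₂` or `(K₁ ∩ K₂) \ {e}` violate the original condition.

A graded partition satisfies the condition. Strip every list of its least colour: the elements
of the bottom level form an independent subset of `⋃_γ E_γ`, where `E_γ = {e | γ ∈ L e}`, and by
induction on the number of levels the others are counted by `∑_γ r (E_γ ∩ ⋃_{δ < γ} E_δ)`.
Submodularity along the chain of colours bounds the sum of these two ranks by `∑_γ r E_γ`.
-/

open Finset Function

namespace Matroid

variable {α β : Type*}

section finsetRk

variable (M : Matroid α)

noncomputable def finsetRk (X : Finset α) : ℕ := (M.eRk X).toNat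

lemma coe_finsetRk (X : Finset α) : (M.finsetRk X : ℕ∞) = M.eRk X :=
  ENat.natCast_toNat <| ne_top_of_le_ne_top (by simp) (M.eRk_le_encard X)

@[simp] lemma finsetRk_empty : M.finsetRk ∅ = 0 := by
  simp [finsetRk]

lemma finsetRk_mono : Monotone M.finsetRk := fun X Y hXY => by
  have := M.eRk_mono (coe_subset.mpr hXY)
  rwa [← coe_finsetRk, ← coe_finsetRk, Nat.cast_le] at this

lemma finsetRk_le_card (X : Finset α) : M.finsetRk X ≤ X.card := by
  have := M.eRk_le_encard X
  rwa [← coe_finsetRk, Set.encard_coe_eq_coe_finsetCard, Nat.cast_le] at this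

lemma finsetRk_inter_add_finsetRk_union_le [DecidableEq α] (X Y : Finset α) :
    M.finsetRk (X ∩ Y) + M.finsetRk (X ∪ Y) ≤ M.finsetRk X + M.finsetRk Y := by
  have := M.eRk_inter_add_eRk_union_le X Y
  rw [← coe_inter, ← coe_union, ← coe_finsetRk, ← coe_finsetRk, ← coe_finsetRk,
    ← coe_finsetRk] at this
  exact_mod_cast this

lemma finsetRk_biUnion_add_sum_le [DecidableEq α] [LinearOrder β] (V : β → Finset α)
    (Γ : Finset β) :
    M.finsetRk (Γ.biUnion V) + ∑ γ ∈ Γ, M.finsetRk (V γ ∩ (Γ.filter (· < γ)).biUnion V) ≤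
      ∑ γ ∈ Γ, M.finsetRk (V γ) := by
  induction Γ using Finset.induction_on_max with
  | empty => simp
  | insert a s hlt ih =>
    have ha : a ∉ s := fun h => lt_irrefl a (hlt a h)
    have hbelow_a : (insert a s).filter (· < a) = s := by
      rw [filter_insert, if_neg (lt_irrefl a), filter_true_of_mem hlt]
    have hbelow : ∀ γ ∈ s, (insert a s).filter (· < γ) = s.filter (· < γ) := fun γ hγ => by
      rw [filter_insert, if_neg (hlt γ hγ).not_gt]
    rw [biUnion_insert, sum_insert ha, sum_insert ha, hbelow_a,
      sum_congr rfl fun γ hγ => by rw [hbelow γ hγ]]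
    have := M.finsetRk_inter_add_finsetRk_union_le (V a) (s.biUnion V)
    omega

variable {M}

lemma Indep.card_le_finsetRk {I X : Finset α} (hI : M.Indep I) (hIX : I ⊆ X) :
    I.card ≤ M.finsetRk X := by
  have := hI.encard_le_eRk_of_subset (coe_subset.mpr hIX)
  rwa [← coe_finsetRk, Set.encard_coe_eq_coe_finsetCard, Nat.cast_le] at this

lemma indep_of_card_le_finsetRk {X : Finset α} (h : X.card ≤ M.finsetRk X) : M.Indep X := by
  rw [indep_iff_eRk_eq_encard_of_finite X.finite_toSet, ← coe_finsetRk,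
    Set.encard_coe_eq_coe_finsetCard, Nat.cast_inj]
  exact le_antisymm (M.finsetRk_le_card X) h

end finsetRk

section ListColoring

variable [DecidableEq β]

noncomputable def listRank (M : Matroid α) (L : α → Finset β) (Γ : Finset β) (K : Finset α) :
    ℕ :=
  ∑ γ ∈ Γ, M.finsetRk (K.filter (γ ∈ L ·))

def RadoCondition (M : Matroid α) (L : α → Finset β) (Γ : Finset β) (E : Finset α) : Prop :=
  ∀ K ⊆ E, K.card ≤ M.listRank L Γ K

def IsListColoring (M : Matroid α) (L : α → Finset β) (E : Finset α) (c : α → β) : Prop :=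
  (∀ e ∈ E, c e ∈ L e) ∧ ∀ γ, M.Indep ↑(E.filter (c · = γ))

variable {M : Matroid α} {L : α → Finset β} {Γ : Finset β} {E : Finset α}

lemma IsListColoring.mono {L' : α → Finset β} {c : α → β} (hc : M.IsListColoring L' E c)
    (hL : ∀ e, L' e ⊆ L e) : M.IsListColoring L E c :=
  ⟨fun e he => hL e (hc.1 e he), hc.2⟩

lemma RadoCondition.exists_isListColoring_of_card_le_one [Nonempty β]
    (h : M.RadoCondition L Γ E) (hL : ∀ e ∈ E, (L e).card ≤ 1) :
    ∃ c, M.IsListColoring L E c := by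
  have hne : ∀ e ∈ E, (L e).Nonempty := fun e he => by
    by_contra! hLe
    simpa [listRank, filter_singleton, hLe] using h {e} (singleton_subset_iff.mpr he)
  choose! c hc using fun e he => card_eq_one.mp ((hL e he).antisymm (hne e he).card_pos)
  refine ⟨c, fun e he => by simp [hc e he], fun γ => indep_of_card_le_finsetRk ?_⟩
  set C := E.filter (c · = γ)
  -- on `C` every list is `{γ}`, so only the summand of `γ` survives in `listRank`
  have hCδ : ∀ δ, C.filter (δ ∈ L ·) = if γ = δ then C else ∅ := fun δ => by
    ext e
    by_cases he : e ∈ E <;> split_ifs <;> simp [C, he, hc] <;> grind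
  calc C.card ≤ M.listRank L Γ C := h C (filter_subset _ _)
    _ = if γ ∈ Γ then M.finsetRk C else 0 := by
      simp only [listRank, hCδ, apply_ite M.finsetRk, finsetRk_empty, sum_ite_eq]
    _ ≤ M.finsetRk C := by split_ifs <;> simp

variable [DecidableEq α]

lemma listRank_update_of_notMem {K : Finset α} {e : α} (he : e ∉ K) (S : Finset β) :
    M.listRank (update L e S) Γ K = M.listRank L Γ K := by
  refine sum_congr rfl fun γ _ => congrArg M.finsetRk (filter_congr fun f hf => ?_)
  rw [update_of_ne (ne_of_mem_of_not_mem hf he)]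

lemma RadoCondition.update_erase_or (h : M.RadoCondition L Γ E) {e : α} {x y : β}
    (hxy : x ≠ y) : M.RadoCondition (update L e ((L e).erase x)) Γ E ∨
      M.RadoCondition (update L e ((L e).erase y)) Γ E := by
  set L₁ := update L e ((L e).erase x)
  set L₂ := update L e ((L e).erase y)
  by_contra! hfail
  simp only [RadoCondition, not_forall, not_le, exists_prop] at hfail
  obtain ⟨⟨K₁, hK₁E, hK₁⟩, ⟨K₂, hK₂E, hK₂⟩⟩ := hfail
  have heK : ∀ {S K}, K ⊆ E → M.listRank (update L e S) Γ K < K.card → e ∈ K :=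
    fun hKE hK => by
      by_contra he
      rw [listRank_update_of_notMem he] at hK
      exact (h _ hKE).not_gt hK
  have he₁ := heK hK₁E hK₁
  have he₂ := heK hK₂E hK₂
  set U := fun γ => K₁.filter (γ ∈ L₁ ·)
  set V := fun γ => K₂.filter (γ ∈ L₂ ·)
  have hunion : ∀ γ, (K₁ ∪ K₂).filter (γ ∈ L ·) ⊆ U γ ∪ V γ := fun γ f hf => by
    by_cases hfe : f = e <;> by_cases hγ : γ = x <;> simp_all [U, V, L₁, L₂]
  have hinter : ∀ γ, ((K₁ ∩ K₂).erase e).filter (γ ∈ L ·) ⊆ U γ ∩ V γ := fun γ f hf => by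
    simp_all [U, V, L₁, L₂]
  have hsubmod : M.listRank L Γ (K₁ ∪ K₂) + M.listRank L Γ ((K₁ ∩ K₂).erase e) ≤
      M.listRank L₁ Γ K₁ + M.listRank L₂ Γ K₂ := by
    simp only [listRank, ← sum_add_distrib]
    exact sum_le_sum fun γ _ => (add_le_add (M.finsetRk_mono (hunion γ))
      (M.finsetRk_mono (hinter γ))).trans <|
        (add_comm _ _).trans_le (M.finsetRk_inter_add_finsetRk_union_le (U γ) (V γ))
  have h₁ := h (K₁ ∪ K₂) (union_subset hK₁E hK₂E)
  have h₂ := h ((K₁ ∩ K₂).erase e) ((erase_subset _ _).trans (inter_subset_left.trans hK₁E))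
  have := card_union_add_card_inter K₁ K₂
  have := card_erase_add_one (mem_inter.mpr ⟨he₁, he₂⟩)
  omega

theorem RadoCondition.exists_isListColoring [Nonempty β] (h : M.RadoCondition L Γ E) :
    ∃ c, M.IsListColoring L E c := by
  induction hn : ∑ f ∈ E, (L f).card using Nat.strong_induction_on generalizing L with
  | _ n ih =>
  by_cases hsmall : ∀ e ∈ E, (L e).card ≤ 1
  · exact h.exists_isListColoring_of_card_le_one hsmall
  push Not at hsmall
  obtain ⟨e, he, hcard⟩ := hsmall
  obtain ⟨x, hx, y, hy, hxy⟩ := one_lt_card.mp hcard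
  have hsub : ∀ z f, update L e ((L e).erase z) f ⊆ L f := fun z f => by
    by_cases hf : f = e
    · subst hf; simp [erase_subset]
    · simp [hf]
  have hrec : ∀ z ∈ L e, M.RadoCondition (update L e ((L e).erase z)) Γ E →
      ∃ c, M.IsListColoring L E c := fun z hz hz' => by
    have hlt : ∑ f ∈ E, (update L e ((L e).erase z) f).card < n :=
      hn ▸ sum_lt_sum (fun f _ => card_le_card (hsub z f))
        ⟨e, he, by simpa using card_erase_lt_of_mem hz⟩
    obtain ⟨c, hc⟩ := ih _ hlt hz' rfl
    exact ⟨c, hc.mono (hsub z)⟩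
  rcases h.update_erase_or (e := e) hxy with h' | h'
  exacts [hrec x hx h', hrec y hy h']

end ListColoring

section Graded

variable [LinearOrder β] [DecidableEq α] {M : Matroid α} {L : α → Finset β} {Γ : Finset β}

theorem card_le_listRank_of_indep_levels {E : Finset α} (lvl : α → ℕ)
    (hΓ : ∀ e ∈ E, L e ⊆ Γ) (hlvl : ∀ e ∈ E, lvl e < (L e).card)
    (hind : ∀ i, M.Indep ↑(E.filter (lvl · = i))) : E.card ≤ M.listRank L Γ E := by
  obtain ⟨k, hk⟩ : ∃ k, ∀ e ∈ E, lvl e < k :=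
    ⟨E.sup lvl + 1, fun e he => Nat.lt_succ_of_le (le_sup he)⟩
  induction k generalizing E lvl L with
  | zero => simp [eq_empty_of_forall_notMem fun e he => Nat.not_lt_zero _ (hk e he)]
  | succ k ih =>
    obtain rfl | ⟨e₀, he₀⟩ := E.eq_empty_or_nonempty
    · simp
    have hne : ∀ e ∈ E, (L e).Nonempty := fun e he =>
      card_pos.mp ((Nat.zero_le _).trans_lt (hlvl e he))
    have : Nonempty β := (hne e₀ he₀).to_type
    choose! m hmL hmin using fun e he => (L e).exists_min_image id (hne e he)
    set V := fun γ => E.filter (γ ∈ L ·)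
    have hbottom : (E.filter (lvl · = 0)).card ≤ M.finsetRk (Γ.biUnion V) :=
      (hind 0).card_le_finsetRk fun e he => by
        obtain ⟨heE, -⟩ := mem_filter.mp he
        exact mem_biUnion.mpr ⟨m e, hΓ e heE (hmL e heE), mem_filter.mpr ⟨heE, hmL e heE⟩⟩
    -- the elements of positive level drop their least colour and one level
    have htop : (E.filter (¬ lvl · = 0)).card ≤
        ∑ γ ∈ Γ, M.finsetRk (V γ ∩ (Γ.filter (· < γ)).biUnion V) := by
      refine (ih (lvl := (lvl · - 1)) (L := fun e => (L e).erase (m e)) ?_ ?_ ?_ ?_).trans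
        (sum_le_sum fun γ _ => M.finsetRk_mono fun e he => ?_)
      · exact fun e he => (erase_subset _ _).trans (hΓ e (mem_filter.mp he).1)
      · intro e he
        obtain ⟨heE, hpos⟩ := mem_filter.mp he
        rw [card_erase_of_mem (hmL e heE)]
        have := hlvl e heE
        omega
      · refine fun i => (hind (i + 1)).subset fun e he => ?_
        simp only [mem_coe, mem_filter] at he ⊢
        exact ⟨he.1.1, by omega⟩
      · exact fun e he => Nat.sub_lt_right_of_lt_add
          (Nat.one_le_iff_ne_zero.mpr (mem_filter.mp he).2) (hk e (mem_filter.mp he).1)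
      · obtain ⟨heE, hγ⟩ := mem_filter.mp he
        replace heE := (mem_filter.mp heE).1
        obtain ⟨hγm, hγL⟩ := mem_erase.mp hγ
        refine mem_inter.mpr ⟨mem_filter.mpr ⟨heE, hγL⟩, mem_biUnion.mpr ⟨m e, ?_, ?_⟩⟩
        · exact mem_filter.mpr ⟨hΓ e heE (hmL e heE), (hmin e heE γ hγL).lt_of_ne' hγm⟩
        · exact mem_filter.mpr ⟨heE, hmL e heE⟩
    calc E.card = (E.filter (lvl · = 0)).card + (E.filter (¬ lvl · = 0)).card :=
          (card_filter_add_card_filter_not _).symm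
      _ ≤ M.finsetRk (Γ.biUnion V) + ∑ γ ∈ Γ, M.finsetRk (V γ ∩ (Γ.filter (· < γ)).biUnion V) :=
          add_le_add hbottom htop
      _ ≤ M.listRank L Γ E := M.finsetRk_biUnion_add_sum_le V Γ

theorem radoCondition_of_indep_levels {E : Finset α} (lvl : α → ℕ)
    (hΓ : ∀ e ∈ E, L e ⊆ Γ) (hlvl : ∀ e ∈ E, lvl e < (L e).card)
    (hind : ∀ i, M.Indep ↑(E.filter (lvl · = i))) : M.RadoCondition L Γ E :=
  fun _ hKE => card_le_listRank_of_indep_levels lvl (fun e he => hΓ e (hKE he))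
    (fun e he => hlvl e (hKE he))
    fun i => (hind i).subset (coe_subset.mpr (filter_subset_filter _ hKE))

end Graded

end Matroid

theorem matroid_list_colorable_of_graded_partition_general {α : Type*} (M : Matroid α)
    (hE : M.E.Finite) (k : ℕ) (I : Fin k → Set α) (hIndep : ∀ i, M.Indep (I i))
    (hunion : ⋃ i, I i = M.E)
    (ℓ : α → ℕ) (hℓ : ∀ i : Fin k, ∀ e ∈ I i, ℓ e = (i : ℕ) + 1)
    (L : α → Finset ℕ) (hL : ∀ e ∈ M.E, (L e).card = ℓ e) :
    ∃ c : α → ℕ, (∀ e ∈ M.E, c e ∈ L e) ∧ ∀ i : ℕ, M.Indep {e ∈ M.E | c e = i} := by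
  classical
  have hpart : ∀ e ∈ M.E, ∃ i : Fin k, e ∈ I i ∧ ℓ e = i + 1 := fun e he => by
    obtain ⟨i, hi⟩ := Set.mem_iUnion.mp (hunion ▸ he)
    exact ⟨i, hi, hℓ i e hi⟩
  set E := hE.toFinset
  have hind : ∀ n : ℕ, M.Indep ↑(E.filter (ℓ · - 1 = n)) := fun n => by
    have hmem : ∀ e ∈ E.filter (ℓ · - 1 = n), ∃ hn : n < k, e ∈ I ⟨n, hn⟩ := fun e he => by
      obtain ⟨heE, hen⟩ : e ∈ M.E ∧ ℓ e - 1 = n := by simpa [E] using he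
      obtain ⟨i, hi, hℓi⟩ := hpart e heE
      obtain rfl : (i : ℕ) = n := by omega
      exact ⟨i.isLt, hi⟩
    by_cases hn : n < k
    · exact (hIndep ⟨n, hn⟩).subset fun e he => (hmem e he).2
    · exact M.empty_indep.subset fun e he => (hn (hmem e he).1).elim
  have hlvl : ∀ e ∈ E, ℓ e - 1 < (L e).card := fun e he => by
    obtain ⟨i, -, hℓi⟩ := hpart e (hE.mem_toFinset.mp he)
    rw [hL e (hE.mem_toFinset.mp he)]
    omega
  obtain ⟨c, hcL, hc⟩ := (Matroid.radoCondition_of_indep_levels (Γ := E.biUnion L) (ℓ · - 1)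
    (fun e he => subset_biUnion_of_mem L he) hlvl hind).exists_isListColoring
  exact ⟨c, fun e he => hcL e (hE.mem_toFinset.mpr he), fun i => by simpa [E] using hc i⟩

/-- **Corollary of Theorem 3.** If `I₁, …, I_k` is a partition of the ground set of a
matroid `M` into independent sets and `ℓ(e) = i` for `e ∈ I_i`, then `M` is properly
colorable from any lists of size `ℓ`. (Here `I` is indexed by `Fin k`, so `I_i` for
`i : Fin k` is the `(i+1)`-st part and `ℓ(e) = i + 1` on it.) -/
theorem matroid_list_colorable_of_graded_partition {α : Type*} (M : Matroid α)
    (hE : M.E.Finite) (k : ℕ) (I : Fin k → Set α) (hIndep : ∀ i, M.Indep (I i))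
    (hdisj : Pairwise (Function.onFun Disjoint I)) (hunion : ⋃ i, I i = M.E)
    (ℓ : α → ℕ) (hℓ : ∀ i : Fin k, ∀ e ∈ I i, ℓ e = (i : ℕ) + 1)
    (L : α → Finset ℕ) (hL : ∀ e ∈ M.E, (L e).card = ℓ e) :
    ∃ c : α → ℕ, (∀ e ∈ M.E, c e ∈ L e) ∧ ∀ i : ℕ, M.Indep {e ∈ M.E | c e = i} :=
  matroid_list_colorable_of_graded_partition_general M hE k I hIndep hunion ℓ hℓ L hL
end

section
/- Let A and B be bases of a matroid M on a finite ground set. Then for every partition B = B₁ ⊔ B₂ ⊔ ⋯ ⊔ B_k of B into k pairwise disjoint (possibly empty) parts, there exists a partition A = A₁ ⊔ A₂ ⊔ ⋯ ⊔ A_k of A into k pairwise disjoint parts such that (A \ A_i) ∪ B_i is a basis of M for every i ∈ {1, …, k}. -/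
/-!
Greene's symmetric exchange: if `A` and `B₁ ⊔ B₂` are bases, then `A = A₁ ⊔ A₂` with `A₁ ∪ B₂`
and `A₂ ∪ B₁` bases. This is the two-matroid union theorem for `M ／ B₂` and `M ／ B₁`, whose
rank condition `|S| ≤ r(S ∪ B₂) - |B₂| + r(S ∪ B₁) - |B₁|` on `S ⊆ A` is submodularity of the
rank of `M`; the union theorem itself holds by contracting the elements of `A` one at a time into
a side that keeps the condition. For `k` parts, split `B = B₀ ⊔ B'` this way into
`A = A₀ ⊔ A'` with `A' ∪ B₀` and `A₀ ∪ B'` bases, and recurse in `M ／ A₀`, where `A'` and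
`B' \ A₀` are bases.
-/

open Set Function

namespace Matroid

variable {α : Type*} {M : Matroid α} {A B₁ B₂ C I X Y : Set α} {e : α}

/-- The `ℕ`-valued rank; junk value `0` when `M.eRk X = ⊤`. -/
noncomputable def rk (M : Matroid α) (X : Set α) : ℕ := (M.eRk X).toNat

lemma Indep.rk_eq_ncard (hI : M.Indep I) : M.rk I = I.ncard := by
  rw [rk, hI.eRk_eq_encard, ncard_def]

lemma rk_singleton_eq_zero_of_not_isNonloop (he : ¬ M.IsNonloop e) : M.rk {e} = 0 := by
  rw [← eRk_singleton_eq_one_iff] at he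
  rw [rk, Order.lt_one_iff.1 ((M.eRk_singleton_le e).lt_of_ne he), ENat.toNat_zero]

lemma Indep.eRk_contract_add_encard (hC : M.Indep C) (X : Set α) :
    (M ／ C).eRk X + C.encard = M.eRk (X ∪ C) := by
  obtain ⟨I, hI, hCI⟩ := hC.subset_isBasis'_of_subset (subset_union_right (s := X))
  have hIC : (M ／ C).IsBasis' (I \ C) (X ∪ C) := hI.contract_isBasis'_sdiff_of_subset hCI
  have hXC : (M ／ C).eRk (X ∪ C) = (M ／ C).eRk X := by
    rw [← eRk_inter_ground, ← (M ／ C).eRk_inter_ground X, contract_ground]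
    congr 1
    tauto_set
  rw [← hXC, hIC.eRk_eq_encard, hI.eRk_eq_encard, encard_sdiff_add_encard_of_subset hCI]

section RankFinite

variable [RankFinite M]

lemma eRk_ne_top (M : Matroid α) [RankFinite M] (X : Set α) : M.eRk X ≠ ⊤ :=
  (M.isRkFinite_set X).eRk_lt_top.ne

lemma rk_mono (hXY : X ⊆ Y) : M.rk X ≤ M.rk Y :=
  ENat.toNat_le_toNat (M.eRk_mono hXY) (M.eRk_ne_top Y)

lemma rk_inter_add_rk_union_le (M : Matroid α) [RankFinite M] (X Y : Set α) :
    M.rk (X ∩ Y) + M.rk (X ∪ Y) ≤ M.rk X + M.rk Y := by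
  simp only [rk]
  rw [← ENat.toNat_add (M.eRk_ne_top _) (M.eRk_ne_top _),
    ← ENat.toNat_add (M.eRk_ne_top _) (M.eRk_ne_top _)]
  exact ENat.toNat_le_toNat (M.eRk_inter_add_eRk_union_le X Y)
    (WithTop.add_ne_top.2 ⟨M.eRk_ne_top _, M.eRk_ne_top _⟩)

lemma Indep.rk_contract_add_ncard (hC : M.Indep C) (X : Set α) :
    (M ／ C).rk X + C.ncard = M.rk (X ∪ C) := by
  simp only [rk, ncard_def]
  rw [← ENat.toNat_add ((M ／ C).eRk_ne_top X) hC.finite.encard_lt_top.ne,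
    hC.eRk_contract_add_encard]

lemma Indep.ncard_le_ncard_of_isBase {B : Set α} (hI : M.Indep I) (hB : M.IsBase B) :
    I.ncard ≤ B.ncard := by
  obtain ⟨B', hB', hIB'⟩ := hI.exists_isBase_superset
  exact (ncard_le_ncard hIB' hB'.finite).trans (hB'.ncard_eq_ncard_of_isBase hB).le

lemma Indep.isBase_of_ncard_le {B : Set α} (hI : M.Indep I) (hB : M.IsBase B)
    (h : B.ncard ≤ I.ncard) : M.IsBase I := by
  obtain ⟨B', hB', hIB'⟩ := hI.exists_isBase_superset
  rwa [eq_of_subset_of_ncard_le hIB' ((hB'.ncard_eq_ncard_of_isBase hB).trans_le h) hB'.finite]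

end RankFinite

section Union

variable {N₁ N₂ : Matroid α}

lemma exists_rk_insert_add_rk_le_ncard [RankFinite N₁]
    (h : N₁.IsNonloop e → ∃ S ⊆ A, (N₁ ／ {e}).rk S + N₂.rk S < S.ncard) :
    ∃ S ⊆ A, N₁.rk (insert e S) + N₂.rk S ≤ S.ncard := by
  by_cases he : N₁.IsNonloop e
  · obtain ⟨S, hSA, hS⟩ := h he
    have hrk := he.indep.rk_contract_add_ncard S
    rw [ncard_singleton, union_singleton] at hrk
    exact ⟨S, hSA, by omega⟩
  · exact ⟨∅, empty_subset A, by simp [rk_singleton_eq_zero_of_not_isNonloop he,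
      N₂.empty_indep.rk_eq_ncard]⟩

variable [RankFinite N₁] [RankFinite N₂]

/-- If neither contraction of `e` keeps the rank condition, the witnesses `S₁`, `S₂` of the two
failures violate it at `insert e (S₁ ∪ S₂)` and `S₁ ∩ S₂`, by submodularity of both ranks. -/
lemma isNonloop_and_forall_ncard_le_contract_or (hA : A.Finite) (heA : e ∉ A)
    (h : ∀ S ⊆ insert e A, S.ncard ≤ N₁.rk S + N₂.rk S) :
    (N₁.IsNonloop e ∧ ∀ S ⊆ A, S.ncard ≤ (N₁ ／ {e}).rk S + N₂.rk S) ∨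
      (N₂.IsNonloop e ∧ ∀ S ⊆ A, S.ncard ≤ (N₂ ／ {e}).rk S + N₁.rk S) := by
  by_contra! hcon
  obtain ⟨S₁, hS₁A, hS₁⟩ := exists_rk_insert_add_rk_le_ncard hcon.1
  obtain ⟨S₂, hS₂A, hS₂⟩ := exists_rk_insert_add_rk_le_ncard hcon.2
  have he₁ : e ∉ S₁ := fun he ↦ heA (hS₁A he)
  have he₂ : e ∉ S₂ := fun he ↦ heA (hS₂A he)
  have hsub₁ := N₁.rk_inter_add_rk_union_le (insert e S₁) S₂
  have hsub₂ := N₂.rk_inter_add_rk_union_le S₁ (insert e S₂)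
  rw [insert_inter_of_notMem he₂, insert_union] at hsub₁
  rw [inter_insert_of_notMem he₁, union_insert] at hsub₂
  have hU := h _ (insert_subset_insert (union_subset hS₁A hS₂A))
  have hI := h (S₁ ∩ S₂) ((inter_subset_left.trans hS₁A).trans (subset_insert e A))
  have hcard := ncard_union_add_ncard_inter S₁ S₂ (hA.subset hS₁A) (hA.subset hS₂A)
  rw [ncard_insert_of_notMem (fun he ↦ he.elim he₁ he₂)
    ((hA.subset hS₁A).union (hA.subset hS₂A))] at hU
  omega

theorem exists_partition_indep_of_forall_ncard_le (hA : A.Finite)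
    (h : ∀ S ⊆ A, S.ncard ≤ N₁.rk S + N₂.rk S) :
    ∃ A₁ A₂, Disjoint A₁ A₂ ∧ A₁ ∪ A₂ = A ∧ N₁.Indep A₁ ∧ N₂.Indep A₂ := by
  induction A, hA using Set.Finite.induction_on generalizing N₁ N₂ with
  | empty => exact ⟨∅, ∅, disjoint_empty _, union_empty _, N₁.empty_indep, N₂.empty_indep⟩
  | @insert e A heA hA ih =>
    rcases isNonloop_and_forall_ncard_le_contract_or hA heA h with ⟨he, hcond⟩ | ⟨he, hcond⟩
    · obtain ⟨A₁, A₂, hdisj, rfl, hA₁, hA₂⟩ := ih hcond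
      rw [he.contractElem_indep_iff] at hA₁
      exact ⟨insert e A₁, A₂, disjoint_insert_left.2 ⟨fun h ↦ heA (Or.inr h), hdisj⟩,
        insert_union, hA₁.2, hA₂⟩
    · obtain ⟨A₂, A₁, hdisj, rfl, hA₂, hA₁⟩ := ih hcond
      rw [he.contractElem_indep_iff] at hA₂
      exact ⟨A₁, insert e A₂, disjoint_insert_right.2 ⟨fun h ↦ heA (Or.inr h), hdisj.symm⟩,
        by rw [union_insert, union_comm], hA₁, hA₂.2⟩

end Union

theorem IsBase.exists_partition_isBase_union_isBase_union [RankFinite M]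
    (hA : M.IsBase A) (hB : M.IsBase (B₁ ∪ B₂)) (hB₁₂ : Disjoint B₁ B₂) :
    ∃ A₁ A₂, Disjoint A₁ A₂ ∧ A₁ ∪ A₂ = A ∧ M.IsBase (A₁ ∪ B₂) ∧ M.IsBase (A₂ ∪ B₁) := by
  have hB₁ : M.Indep B₁ := hB.indep.subset subset_union_left
  have hB₂ : M.Indep B₂ := hB.indep.subset subset_union_right
  have hcond : ∀ S ⊆ A, S.ncard ≤ (M ／ B₂).rk S + (M ／ B₁).rk S := by
    intro S hSA
    have hsub := M.rk_inter_add_rk_union_le (S ∪ B₂) (S ∪ B₁)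
    rw [← union_inter_distrib_left, hB₁₂.symm.inter_eq, union_empty,
      (hA.indep.subset hSA).rk_eq_ncard] at hsub
    have hmono : M.rk (B₁ ∪ B₂) ≤ M.rk (S ∪ B₂ ∪ (S ∪ B₁)) := rk_mono (by tauto_set)
    rw [hB.indep.rk_eq_ncard, ncard_union_eq hB₁₂ hB₁.finite hB₂.finite] at hmono
    have h₁ := hB₂.rk_contract_add_ncard S
    have h₂ := hB₁.rk_contract_add_ncard S
    omega
  obtain ⟨A₁, A₂, hdisj, rfl, hA₁, hA₂⟩ :=
    exists_partition_indep_of_forall_ncard_le hA.finite hcond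
  rw [hB₂.contract_indep_iff] at hA₁
  rw [hB₁.contract_indep_iff] at hA₂
  have hcard : (A₁ ∪ B₂).ncard + (A₂ ∪ B₁).ncard = (A₁ ∪ A₂).ncard + (B₁ ∪ B₂).ncard := by
    rw [ncard_union_eq hA₁.1 (hA.finite.subset subset_union_left) hB₂.finite,
      ncard_union_eq hA₂.1 (hA.finite.subset subset_union_right) hB₁.finite,
      ncard_union_eq hdisj (hA.finite.subset subset_union_left)
        (hA.finite.subset subset_union_right), ncard_union_eq hB₁₂ hB₁.finite hB₂.finite]
    ring
  have hBA := hB.ncard_eq_ncard_of_isBase hA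
  have h₁ := hA₁.2.ncard_le_ncard_of_isBase hA
  have h₂ := hA₂.2.ncard_le_ncard_of_isBase hA
  exact ⟨A₁, A₂, hdisj, rfl, hA₁.2.isBase_of_ncard_le hA (by omega),
    hA₂.2.isBase_of_ncard_le hA (by omega)⟩

theorem IsBase.exists_partition_isBase_sdiff_union [RankFinite M] (hA : M.IsBase A) {k : ℕ}
    (Bp : Fin k → Set α) (hBdisj : Pairwise (Disjoint on Bp)) (hB : M.IsBase (⋃ i, Bp i)) :
    ∃ Ap : Fin k → Set α, Pairwise (Disjoint on Ap) ∧ ⋃ i, Ap i = A ∧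
      ∀ i, M.IsBase ((A \ Ap i) ∪ Bp i) := by
  induction k generalizing M A with
  | zero =>
    rw [iUnion_of_empty] at hB
    have hA₀ : A = ∅ := (hB.eq_of_subset_isBase hA (empty_subset A)).symm
    exact ⟨fun _ ↦ ∅, fun i ↦ i.elim0, by simp [hA₀], fun i ↦ i.elim0⟩
  | succ k ih =>
    induction Bp using Fin.consCases with | cons B₀ B' =>
    rw [pairwise_fin_succ_iff_of_isSymm] at hBdisj
    simp only [onFun, Fin.cons_zero, Fin.cons_succ] at hBdisj
    rw [iUnion_cons] at hB
    obtain ⟨A₀, A', hdisj, rfl, hA₀B', hA'B₀⟩ :=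
      hA.exists_partition_isBase_union_isBase_union hB (disjoint_iUnion_right.2 hBdisj.1)
    have hA₀ : M.Indep A₀ := hA.indep.subset subset_union_left
    obtain ⟨Ap', hAp'disj, hAp'A', hAp'⟩ := ih (M := M ／ A₀) (A := A')
      (hA₀.contract_isBase_iff.2 ⟨by rwa [union_comm], hdisj.symm⟩) (fun i ↦ B' i \ A₀)
      (fun i j hij ↦ (hBdisj.2 hij).mono sdiff_subset sdiff_subset)
      (by rw [← iUnion_sdiff, hA₀.contract_isBase_iff, sdiff_union_self]
          exact ⟨by rwa [union_comm], disjoint_sdiff_left⟩)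
    refine ⟨Fin.cons A₀ Ap', ?_, by rw [iUnion_cons, hAp'A'], Fin.cases ?_ fun j ↦ ?_⟩
    · rw [pairwise_fin_succ_iff_of_isSymm]
      simp only [onFun, Fin.cons_zero, Fin.cons_succ]
      exact ⟨fun j ↦ hdisj.mono_right (hAp'A' ▸ subset_iUnion Ap' j), hAp'disj⟩
    · simpa [union_sdiff_cancel_left hdisj.le_bot] using hA'B₀
    · convert (hA₀.contract_isBase_iff.1 (hAp' j)).1 using 1
      have := hdisj.mono_right (hAp'A' ▸ subset_iUnion Ap' j)
      simp only [Fin.cons_succ]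
      tauto_set

end Matroid

/-- If `A` and `B` are bases of a matroid `M` on a finite ground set, then for every
partition `B = B₁ ⊔ ⋯ ⊔ B_k` there is a partition `A = A₁ ⊔ ⋯ ⊔ A_k` such that
`(A \ A_i) ∪ B_i` is a basis for every `i`. -/
theorem basis_partition_exchange' {α : Type*} (M : Matroid α) (hE : M.E.Finite)
    (A B : Set α) (hA : M.IsBase A) (hB : M.IsBase B) (k : ℕ) (Bp : Fin k → Set α)
    (hBdisj : Pairwise (Function.onFun Disjoint Bp)) (hBun : ⋃ i, Bp i = B) :
    ∃ Ap : Fin k → Set α, Pairwise (Function.onFun Disjoint Ap) ∧ (⋃ i, Ap i = A) ∧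
      ∀ i, M.IsBase ((A \ Ap i) ∪ Bp i) := by
  have : M.Finite := ⟨hE⟩
  subst hBun
  exact hA.exists_partition_isBase_sdiff_union Bp hBdisj hB
end
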